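/- For every α ∈ (0,1) and x ∈ ℝ^k, the prox objective P_α(x, ·) attains a unique minimizer z* over the probability simplex Δ_k, and this minimizer satisfies z*_i > 0 for every coordinate i. -/

import Mathlib

/-- The probability simplex Δ_k in ℝ^k. -/
def simplex (k : ℕ) : Set (Fin k → ℝ) :=
  {z | (∀ i, 0 ≤ z i) ∧ ∑ i, z i = 1}

/-- The prox objective `P_α(x, z) = (1/2)‖x − z‖₂² + α Σ_i z_i log z_i − (α/2)‖z‖₂²`.
(Note `Real.log 0 = 0`, giving the convention `0 · log 0 = 0`.) -/
noncomputable def proxObj {k : ℕ} (α : ℝ) (x z : Fin k → ℝ) : ℝ :=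
  (1 / 2) * ∑ i, (x i - z i) ^ 2 + α * ∑ i, z i * Real.log (z i)
    - (α / 2) * ∑ i, (z i) ^ 2

lemma simplex_eq (k : ℕ) : simplex k = stdSimplex ℝ (Fin k) := rfl

noncomputable def gfun (α a t : ℝ) : ℝ :=
  (1 / 2) * (a - t) ^ 2 + α * (t * Real.log t) - (α / 2) * t ^ 2

lemma proxObj_eq_sum {k : ℕ} (α : ℝ) (x z : Fin k → ℝ) :
    proxObj α x z = ∑ i, gfun α (x i) (z i) := by
  simp only [proxObj, gfun, Finset.mul_sum, ← Finset.sum_add_distrib,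
    ← Finset.sum_sub_distrib]

lemma continuous_proxObj {k : ℕ} (α : ℝ) (x : Fin k → ℝ) :
    Continuous (proxObj α x) := by
  have h : (proxObj α x) = fun z => ∑ i, gfun α (x i) (z i) := by
    funext z; exact proxObj_eq_sum α x z
  rw [h]
  apply continuous_finset_sum
  intro i _
  exact ((continuous_const.mul ((continuous_const.sub (continuous_apply i)).pow 2)).add
    (continuous_const.mul (Real.continuous_mul_log.comp (continuous_apply i)))).sub
    (continuous_const.mul ((continuous_apply i).pow 2))

lemma sum_diff_pair {k : ℕ} {i j : Fin k} (hij : i ≠ j) (u v : Fin k → ℝ)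
    (h : ∀ m, m ≠ i → m ≠ j → u m = v m) :
    ∑ m, u m - ∑ m, v m = (u i - v i) + (u j - v j) := by
  have h2 : ∑ m ∈ ({i, j} : Finset (Fin k)), (u m - v m) = ∑ m, (u m - v m) := by
    apply Finset.sum_subset (Finset.subset_univ _)
    intro m _ hm
    simp only [Finset.mem_insert, Finset.mem_singleton] at hm
    push_neg at hm
    rw [h m hm.1 hm.2]; ring
  rw [← Finset.sum_sub_distrib, ← h2, Finset.sum_pair hij]

lemma gfun_mid {α : ℝ} (h0 : 0 < α) (h1 : α < 1) (a : ℝ) {s t : ℝ}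
    (hs : 0 ≤ s) (ht : 0 ≤ t) :
    gfun α a ((s + t) / 2) ≤ (gfun α a s + gfun α a t) / 2 ∧
    (s ≠ t → gfun α a ((s + t) / 2) < (gfun α a s + gfun α a t) / 2) := by
  have hent := Real.convexOn_mul_log.2 (Set.mem_Ici.2 hs) (Set.mem_Ici.2 ht)
    (by norm_num : (0:ℝ) ≤ 1/2) (by norm_num : (0:ℝ) ≤ 1/2) (by norm_num)
  simp only [smul_eq_mul] at hent
  have hent' : ((s + t) / 2) * Real.log ((s + t) / 2)
      ≤ (s * Real.log s + t * Real.log t) / 2 := by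
    have : (1:ℝ)/2 * s + 1/2 * t = (s + t)/2 := by ring
    rw [this] at hent; linarith
  constructor
  · unfold gfun; nlinarith [sq_nonneg (s - t), h0.le, mul_le_mul_of_nonneg_left hent' h0.le]
  · intro hst
    have hst2 : 0 < (s - t)^2 := by have := sub_ne_zero.2 hst; positivity
    unfold gfun
    nlinarith [mul_le_mul_of_nonneg_left hent' h0.le,
      mul_pos (by linarith : (0:ℝ) < 1 - α) hst2]

lemma key_neg {α a1 a2 b ε : ℝ} (h0 : 0 < α) (h1 : α < 1) (hb : 0 < b)
    (hε : 0 < ε) (hεb : ε ≤ b / 2) (hε1 : ε ≤ 1)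
    (hlog : Real.log ε ≤ -((|a1| + |a2| + 1 + b + α * |Real.log (b / 2)|) + 1) / α) :
    (gfun α a1 ε - gfun α a1 0) + (gfun α a2 (b - ε) - gfun α a2 b) < 0 := by
  set C : ℝ := |a1| + |a2| + 1 + b + α * |Real.log (b / 2)| with hC
  have hb2 : (0:ℝ) < b / 2 := by linarith
  have hbe : 0 < b - ε := by linarith
  have l1 : Real.log (b - ε) ≤ Real.log b := Real.log_le_log hbe (by linarith)
  have l2 : Real.log (b / 2) ≤ Real.log (b - ε) := Real.log_le_log hb2 (by linarith)
  have l3 : -Real.log (b - ε) ≤ |Real.log (b / 2)| := by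
    have := neg_abs_le (Real.log (b / 2)); linarith
  have entj : (b - ε) * Real.log (b - ε) - b * Real.log b ≤ ε * |Real.log (b / 2)| := by
    have e1 : ε * (-Real.log (b - ε)) ≤ ε * |Real.log (b / 2)| :=
      mul_le_mul_of_nonneg_left l3 hε.le
    have e2 : b * Real.log (b - ε) ≤ b * Real.log b :=
      mul_le_mul_of_nonneg_left l1 hb.le
    nlinarith
  have hlog2 : α * Real.log ε ≤ -(C + 1) := by
    have := mul_le_mul_of_nonneg_right hlog h0.le
    rwa [div_mul_cancel₀ _ h0.ne', mul_comm] at this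
  have hent_i : α * (ε * Real.log ε) ≤ ε * (-(C + 1)) := by
    have := mul_le_mul_of_nonneg_left hlog2 hε.le
    linarith [this]
  have hε2 : ε ^ 2 ≤ ε := by nlinarith
  have ha1 : ε * (-a1) ≤ ε * |a1| := mul_le_mul_of_nonneg_left (neg_le_abs a1) hε.le
  have ha2 : ε * a2 ≤ ε * |a2| := mul_le_mul_of_nonneg_left (le_abs_self a2) hε.le
  have entj' : α * ((b - ε) * Real.log (b - ε) - b * Real.log b)
      ≤ α * (ε * |Real.log (b / 2)|) := mul_le_mul_of_nonneg_left entj h0.le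
  rw [hC] at hent_i
  simp only [gfun, Real.log_zero]
  nlinarith [mul_pos hε hb, mul_nonneg h0.le (sq_nonneg ε),
    mul_le_mul_of_nonneg_right h1.le (mul_pos hε hb).le]

theorem stmt8 {k : ℕ} (hk : 0 < k) (α : ℝ) (hα : α ∈ Set.Ioo (0 : ℝ) 1)
    (x : Fin k → ℝ) :
    ∃ z : Fin k → ℝ, z ∈ simplex k ∧
      (∀ w ∈ simplex k, proxObj α x z ≤ proxObj α x w) ∧
      (∀ i, 0 < z i) ∧
      (∀ z' : Fin k → ℝ, z' ∈ simplex k →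
        (∀ w ∈ simplex k, proxObj α x z' ≤ proxObj α x w) → z' = z) := by
  obtain ⟨hα0, hα1⟩ := hα
  have hne : (simplex k).Nonempty :=
    ⟨Pi.single ⟨0, hk⟩ 1, single_mem_stdSimplex ℝ _⟩
  have hcpt : IsCompact (simplex k) := by rw [simplex_eq]; exact isCompact_stdSimplex ℝ _
  obtain ⟨z, hz, hminOn⟩ := hcpt.exists_isMinOn hne (continuous_proxObj α x).continuousOn
  have hmin : ∀ w ∈ simplex k, proxObj α x z ≤ proxObj α x w := fun w hw => hminOn hw
  -- positivity
  have hpos : ∀ i, 0 < z i := by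
    intro i
    rcases (hz.1 i).lt_or_eq with hlt | heq
    · exact hlt
    exfalso
    have hsum := hz.2
    have hexj : ∃ j, 0 < z j := by
      by_contra hcon; push_neg at hcon
      have hz0 : ∀ j, z j = 0 := fun j => le_antisymm (hcon j) (hz.1 j)
      simp [hz0] at hsum
    obtain ⟨j, hj⟩ := hexj
    have hij : i ≠ j := by
      intro e; rw [← e] at hj; linarith
    set C : ℝ := |x i| + |x j| + 1 + z j + α * |Real.log (z j / 2)| with hCdef
    set ε : ℝ := min (z j / 2) (min 1 (Real.exp (-(C + 1) / α))) with hεdef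
    have hε : 0 < ε := lt_min (by linarith) (lt_min one_pos (Real.exp_pos _))
    have hεb : ε ≤ z j / 2 := min_le_left _ _
    have hε1 : ε ≤ 1 := le_trans (min_le_right _ _) (min_le_left _ _)
    have hεe : ε ≤ Real.exp (-(C + 1) / α) :=
      le_trans (min_le_right _ _) (min_le_right _ _)
    have hlog : Real.log ε ≤ -(C + 1) / α := by
      calc Real.log ε ≤ Real.log (Real.exp (-(C + 1) / α)) := Real.log_le_log hε hεe
        _ = -(C + 1) / α := Real.log_exp _
    rw [hCdef] at hlog
    have hneg := key_neg hα0 hα1 hj hε hεb hε1 hlog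
    set w : Fin k → ℝ := fun m => if m = i then ε else if m = j then z j - ε else z m
      with hwdef
    have hwi : w i = ε := by simp only [hwdef, if_pos rfl]
    have hwj : w j = z j - ε := by
      simp [hwdef, hij.symm]
    have hwm : ∀ m, m ≠ i → m ≠ j → w m = z m := by
      intro m h1 h2; simp only [hwdef]; rw [if_neg h1, if_neg h2]
    have hwsum := sum_diff_pair hij w z hwm
    rw [hwi, hwj, ← heq] at hwsum
    have hwmem : w ∈ simplex k := by
      constructor
      · intro m
        by_cases h1 : m = i
        · rw [h1, hwi]; exact hε.le
        by_cases h2 : m = j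
        · rw [h2, hwj]; linarith
        · rw [hwm m h1 h2]; exact hz.1 m
      · have : ∑ m, w m - ∑ m, z m = 0 := by rw [hwsum]; ring
        linarith [hz.2]
    have hdiff : proxObj α x w - proxObj α x z =
        (gfun α (x i) (w i) - gfun α (x i) (z i)) +
        (gfun α (x j) (w j) - gfun α (x j) (z j)) := by
      rw [proxObj_eq_sum, proxObj_eq_sum]
      exact sum_diff_pair hij _ _ (fun m h1 h2 => by rw [hwm m h1 h2])
    rw [hwi, hwj, ← heq] at hdiff
    have := hmin w hwmem
    linarith [hdiff, hneg, this]
  refine ⟨z, hz, hmin, hpos, ?_⟩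
  -- uniqueness
  intro z' hz' hmin'
  by_contra hnez
  obtain ⟨i, hi⟩ : ∃ i, z' i ≠ z i := by
    by_contra hcc; push_neg at hcc; exact hnez (funext hcc)
  set mid : Fin k → ℝ := fun m => (z' m + z m) / 2 with hmiddef
  have hmidmem : mid ∈ simplex k := by
    have hc := (convex_stdSimplex ℝ (Fin k)) hz' hz
      (by norm_num : (0:ℝ) ≤ 1/2) (by norm_num : (0:ℝ) ≤ 1/2) (by norm_num)
    have : mid = (1/2 : ℝ) • z' + (1/2 : ℝ) • z := by
      funext m; simp only [hmiddef, Pi.add_apply, Pi.smul_apply, smul_eq_mul]; ring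
    rw [simplex_eq, this]; exact hc
  have hlt : proxObj α x mid < (proxObj α x z' + proxObj α x z) / 2 := by
    rw [proxObj_eq_sum, proxObj_eq_sum, proxObj_eq_sum, div_eq_mul_inv,
      ← Finset.sum_add_distrib, Finset.sum_mul]
    apply Finset.sum_lt_sum
    · intro m _
      have := (gfun_mid hα0 hα1 (x m) (hz'.1 m) (hz.1 m)).1
      simp only [hmiddef]; linarith [this]
    · refine ⟨i, Finset.mem_univ i, ?_⟩
      have := (gfun_mid hα0 hα1 (x i) (hz'.1 i) (hz.1 i)).2 hi
      simp only [hmiddef]; linarith [this]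
  have heq2 : proxObj α x z' = proxObj α x z :=
    le_antisymm (hmin' z hz) (hmin z' hz')
  have h1 := hmin mid hmidmem
  linarith
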